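/- Let M ∈ ℕ, v : Fin M → ℝ, w : Fin M → ℝ, e ∈ ℝ, and for a finite set A ⊆ Fin M and k ≥ 1 define B_k(A, e) := ∑_{S ⊆ A, |S| ≥ k, v(α_k(S)) = e} (∏_{t ∈ S} w t) · (∏_{t ∈ A \ S} (1 − w t)), where α_k(S) is the k-th smallest index of S. Suppose i ∈ Fin M, A ⊆ Fin M, i ∉ A, and every element of A is greater than i. Then: (a) for k = 1, B_1({i} ∪ A, e) = B_1(A, e) · (1 − w i) + (if v(i) = e then 1 else 0) · w i, provided 0 ≤ w t ≤ 1 for all t ∈ A (so that ∑_{S ⊆ A} (∏_{t∈S} w t)(∏_{t∈A\S}(1−w t)) = 1); and (b) for k ≥ 2, B_k({i} ∪ A, e) = B_k(A, e) · (1 − w i) + B_{k−1}(A, e) · w i. -/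

import Mathlib

/-!
Condition on whether the top-ranked point `i` is sampled. Subsets of `{i} ∪ A` avoiding `i`
are the subsets of `A`, each weighted by an extra factor `1 - w i`; those containing `i` are
`insert i T` with `T ⊆ A`, weighted by an extra factor `w i`. Since `i` precedes all of `A`, the
sorted list of `insert i T` is `i :: T.sort`, so its first entry is `i` and its `k`-th entry is the
`(k - 1)`-th entry of `T.sort`. For `k = 1` the second part is `𝕀{v i = e} · w i` because the
sampling weights of the subsets of `A` sum to `∏ t ∈ A, (w t + (1 - w t)) = 1`.
-/

open scoped Classical in
/-- The boundary value probability `B_k(A, e)`: the total sampling probability of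
subsets `S ⊆ A` with `|S| ≥ k` whose `k`-th highest-ranked element has utility value
`e`. Here `α_k(S)` is the `k`-th smallest index of `S`. -/
noncomputable def boundaryValueProb {M : ℕ} (v w : Fin M → ℝ) (k : ℕ)
    (A : Finset (Fin M)) (e : ℝ) : ℝ :=
  ∑ S ∈ A.powerset.filter
      (fun S => k ≤ S.card ∧ ((S.sort (· ≤ ·))[k - 1]?).map v = some e),
    (∏ t ∈ S, w t) * ∏ t ∈ A \ S, (1 - w t)

open Finset

section SubsetWeight

variable {α R : Type*} [DecidableEq α] [CommRing R]

/-- The probability that independent Bernoulli(`w t`) sampling of `A` returns exactly `S`. -/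
def subsetWeight (w : α → R) (A S : Finset α) : R :=
  (∏ t ∈ S, w t) * ∏ t ∈ A \ S, (1 - w t)

theorem sum_subsetWeight_powerset (w : α → R) (A : Finset α) :
    ∑ S ∈ A.powerset, subsetWeight w A S = 1 := by
  simpa [subsetWeight] using (prod_add w (fun t => 1 - w t) A).symm

variable {w : α → R} {A S : Finset α} {i : α}

theorem subsetWeight_insert_of_notMem (hiA : i ∉ A) (hS : S ⊆ A) :
    subsetWeight w (insert i A) S = subsetWeight w A S * (1 - w i) := by
  have hiS : i ∉ S := fun h => hiA (hS h)
  have hiAS : i ∉ A \ S := fun h => hiA (mem_sdiff.1 h).1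
  rw [subsetWeight, insert_sdiff_of_notMem A hiS, prod_insert hiAS, subsetWeight]
  ring

theorem subsetWeight_insert_insert (hiA : i ∉ A) (hS : S ⊆ A) :
    subsetWeight w (insert i A) (insert i S) = subsetWeight w A S * w i := by
  have hiS : i ∉ S := fun h => hiA (hS h)
  rw [subsetWeight, insert_sdiff_insert, sdiff_insert_of_notMem hiA, prod_insert hiS,
    subsetWeight]
  ring

theorem sum_powerset_insert_mul_subsetWeight (hiA : i ∉ A) (g : Finset α → R) :
    ∑ S ∈ (insert i A).powerset, g S * subsetWeight w (insert i A) S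
      = (∑ S ∈ A.powerset, g S * subsetWeight w A S) * (1 - w i)
        + (∑ S ∈ A.powerset, g (insert i S) * subsetWeight w A S) * w i := by
  rw [sum_powerset_insert hiA, sum_mul, sum_mul]
  congr 1 <;> refine sum_congr rfl fun S hS => ?_
  · rw [subsetWeight_insert_of_notMem hiA (mem_powerset.1 hS)]
    ring
  · rw [subsetWeight_insert_insert hiA (mem_powerset.1 hS)]
    ring

end SubsetWeight

section BoundaryValue

variable {α β : Type*} [LinearOrder α]

/-- `α_k(S)` exists and has value `e`; for `k = 0` the index `k - 1` truncates to `0`. -/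
def IsBoundaryValue (v : α → β) (k : ℕ) (e : β) (S : Finset α) : Prop :=
  k ≤ S.card ∧ ((S.sort (· ≤ ·))[k - 1]?).map v = some e

variable {v : α → β} {e : β} {i : α} {T : Finset α}

theorem isBoundaryValue_one_insert (hlt : ∀ a ∈ T, i < a) (hiT : i ∉ T) :
    IsBoundaryValue v 1 e (insert i T) ↔ v i = e := by
  rw [IsBoundaryValue, card_insert_of_notMem hiT, sort_insert _ (fun a ha => (hlt a ha).le) hiT]
  simp

theorem isBoundaryValue_succ_insert {k : ℕ} (hk : k ≠ 0) (hlt : ∀ a ∈ T, i < a) (hiT : i ∉ T) :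
    IsBoundaryValue v (k + 1) e (insert i T) ↔ IsBoundaryValue v k e T := by
  obtain ⟨k, rfl⟩ := Nat.exists_eq_succ_of_ne_zero hk
  rw [IsBoundaryValue, IsBoundaryValue, card_insert_of_notMem hiT,
    sort_insert _ (fun a ha => (hlt a ha).le) hiT]
  simp

end BoundaryValue

open scoped Classical in
theorem boundaryValueProb_eq_sum {M : ℕ} (v w : Fin M → ℝ) (k : ℕ) (A : Finset (Fin M))
    (e : ℝ) :
    boundaryValueProb v w k A e
      = ∑ S ∈ A.powerset, (if IsBoundaryValue v k e S then 1 else 0) * subsetWeight w A S := by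
  rw [boundaryValueProb, sum_filter]
  refine sum_congr rfl fun S _ => ?_
  unfold IsBoundaryValue subsetWeight
  split_ifs <;> simp

/-- Dynamic programming recurrence for the boundary value probability: if `i` is
ranked higher than every element of `A`, then
(a) `B_1({i} ∪ A, e) = B_1(A, e)·(1 - w i) + 𝕀{v i = e}·w i` (given `w` is `[0,1]`-valued
on `A`), and (b) for `k ≥ 2`, `B_k({i} ∪ A, e) = B_k(A, e)·(1 - w i) + B_{k-1}(A, e)·w i`. -/
theorem boundaryValueProb_recurrence (M : ℕ) (v w : Fin M → ℝ) (e : ℝ)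
    (i : Fin M) (A : Finset (Fin M)) (hiA : i ∉ A) (hlt : ∀ a ∈ A, i < a) :
    ((∀ t ∈ A, 0 ≤ w t ∧ w t ≤ 1) →
      boundaryValueProb v w 1 ({i} ∪ A) e
        = boundaryValueProb v w 1 A e * (1 - w i)
          + (if v i = e then (1 : ℝ) else 0) * w i)
    ∧ (∀ k : ℕ, 2 ≤ k →
      boundaryValueProb v w k ({i} ∪ A) e
        = boundaryValueProb v w k A e * (1 - w i)
          + boundaryValueProb v w (k - 1) A e * w i) := by
  classical
  have hsplit : ∀ k, boundaryValueProb v w k ({i} ∪ A) e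
      = boundaryValueProb v w k A e * (1 - w i)
        + (∑ T ∈ A.powerset, (if IsBoundaryValue v k e (insert i T) then 1 else 0)
            * subsetWeight w A T) * w i := fun k => by
    rw [← insert_eq, boundaryValueProb_eq_sum, sum_powerset_insert_mul_subsetWeight hiA,
      boundaryValueProb_eq_sum]
  have hbelow : ∀ T ∈ A.powerset, (∀ a ∈ T, i < a) ∧ i ∉ T := fun T hT =>
    ⟨fun a ha => hlt a (mem_powerset.1 hT ha), fun h => hiA (mem_powerset.1 hT h)⟩
  refine ⟨fun _ => ?_, fun k hk => ?_⟩
  · rw [hsplit, ← mul_one (ite _ _ _), ← sum_subsetWeight_powerset w A, mul_sum]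
    congr 2
    refine sum_congr rfl fun T hT => ?_
    simp only [isBoundaryValue_one_insert (hbelow T hT).1 (hbelow T hT).2]
  · obtain ⟨k, rfl⟩ : ∃ m, k = m + 1 := ⟨k - 1, by omega⟩
    rw [hsplit, Nat.add_sub_cancel, boundaryValueProb_eq_sum v w k]
    congr 2
    refine sum_congr rfl fun T hT => ?_
    simp only [isBoundaryValue_succ_insert (k := k) (by omega) (hbelow T hT).1 (hbelow T hT).2]
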